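/- arXiv:2310.15748 — 4 statements merged into one kernel-verified Lean document; each statement's English description precedes it below -/
import Mathlib

section
/- (Parametrization (psi-2) of the paper.) Fix δ ∈ {−1, 1}. Let u, t₁, S₄, q₅ ∈ ℝ satisfy q₅ + 3u² ≠ 0 and uS₄ − t₁(q₅ − 3u²) ≠ 0. Set v₂ = −(S₄ + 6t₁u)/(q₅ + 3u²), v₁ = u·v₂, and define t₂ and S₃ by δt₂ = (S₄ + 6t₁u)(q₅ + 3u²)²/(72(uS₄ − t₁(q₅ − 3u²))) + 2δ(S₄ + 6t₁u)/(3(q₅ + 3u²)) − u(q₅ + u²)/4 and S₃ = (S₄ + 6t₁u)²(q₅ + 3u²)/(6(uS₄ − t₁(q₅ − 3u²))) + 4δ(S₄ + 6t₁u)²/(q₅ + 3u²)² − 2u(S₄ + 3t₁u). Then (v₁,v₂) satisfies the system 3v₁² + q₅v₂² + 6t₁v₁ + S₄v₂ = 0 and 4δv₂³ + 2q₅v₁v₂ + 12δt₂v₂² + S₄v₁ + S₃v₂ = 0, and moreover 6(t₁+v₁)(S₃ + 12δv₂² + 24δt₂v₂ + 2q₅v₁) = (S₄ + 2q₅v₂)².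 -/
noncomputable section

set_option maxHeartbeats 4000000 in
/-- parametrization (psi-2): for `q₅ + 3u² ≠ 0` and
`uS₄ − t₁(q₅ − 3u²) ≠ 0`, the point `(t₂, S₃)` given by the formulas (psi-2) and
`v₂ = −(S₄ + 6t₁u)/(q₅ + 3u²)`, `v₁ = u·v₂` satisfy the system (peresech-2)
together with the criticality equation (psi-1). -/
theorem stmt9 (δ : ℝ) (hδ : δ = 1 ∨ δ = -1) (u t₁ S₄ q₅ : ℝ)
    (h1 : q₅ + 3 * u ^ 2 ≠ 0)
    (h2 : u * S₄ - t₁ * (q₅ - 3 * u ^ 2) ≠ 0)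
    (v₁ v₂ t₂ S₃ : ℝ)
    (hv₂ : v₂ = -(S₄ + 6 * t₁ * u) / (q₅ + 3 * u ^ 2))
    (hv₁ : v₁ = u * v₂)
    (ht₂ : δ * t₂ =
      (S₄ + 6 * t₁ * u) * (q₅ + 3 * u ^ 2) ^ 2
          / (72 * (u * S₄ - t₁ * (q₅ - 3 * u ^ 2)))
        + 2 * δ * (S₄ + 6 * t₁ * u) / (3 * (q₅ + 3 * u ^ 2))
        - u * (q₅ + u ^ 2) / 4)
    (hS₃ : S₃ =
      (S₄ + 6 * t₁ * u) ^ 2 * (q₅ + 3 * u ^ 2)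
          / (6 * (u * S₄ - t₁ * (q₅ - 3 * u ^ 2)))
        + 4 * δ * (S₄ + 6 * t₁ * u) ^ 2 / (q₅ + 3 * u ^ 2) ^ 2
        - 2 * u * (S₄ + 3 * t₁ * u)) :
    3 * v₁ ^ 2 + q₅ * v₂ ^ 2 + 6 * t₁ * v₁ + S₄ * v₂ = 0 ∧
    4 * δ * v₂ ^ 3 + 2 * q₅ * v₁ * v₂ + 12 * δ * t₂ * v₂ ^ 2 + S₄ * v₁ + S₃ * v₂ = 0 ∧
    6 * (t₁ + v₁) * (S₃ + 12 * δ * v₂ ^ 2 + 24 * δ * t₂ * v₂ + 2 * q₅ * v₁) =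
      (S₄ + 2 * q₅ * v₂) ^ 2 := by
  have h1' : (q₅ + 3 * u ^ 2) ^ 2 ≠ 0 := pow_ne_zero _ h1
  rcases hδ with rfl | rfl <;>
  · simp only [one_mul, neg_one_mul, neg_eq_iff_eq_neg] at ht₂ ⊢
    subst ht₂ hS₃ hv₁ hv₂
    have hA : q₅ + u ^ 2 * 3 ≠ 0 := by contrapose! h1; linarith
    have hB : S₄ * u - t₁ * (q₅ - u ^ 2 * 3) ≠ 0 := by contrapose! h2; linarith
    have hC : u * S₄ - t₁ * (q₅ - u ^ 2 * 3) ≠ 0 := by contrapose! h2; linarith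
    refine ⟨by field_simp; ring, by field_simp; ring, by field_simp; ring⟩
end
end

section
/- (Key identity behind Lemma samoperesechS4-4, item 1.) Fix δ ∈ {−1, 1}. Let u, t₁, S₄, q₅ ∈ ℝ satisfy q₅ + 3u² ≠ 0 and uS₄ − t₁(q₅ − 3u²) ≠ 0, and let S₃ = (S₄ + 6t₁u)²(q₅ + 3u²)/(6(uS₄ − t₁(q₅ − 3u²))) + 4δ(S₄ + 6t₁u)²/(q₅ + 3u²)² − 2u(S₄ + 3t₁u). Then (6t₁S₃ − S₄²)·(uS₄ − t₁(q₅ − 3u²))·(q₅ + 3u²)² = −(S₄ + 6t₁u)²·Q(u), where Q(u) = (uS₄ − 2q₅t₁)(q₅ + 3u²)² − 24δt₁(uS₄ − t₁(q₅ − 3u²)). In particular, 6t₁S₃ = S₄² if and only if Q(u) = 0 or S₄ + 6t₁u = 0. -/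
noncomputable section

/-- key identity behind Lemma samoperesechS4-4, item 1:
`(6t₁S₃ − S₄²)(uS₄ − t₁(q₅ − 3u²))(q₅ + 3u²)² = −(S₄ + 6t₁u)²·Q(u)` where
`Q(u) = (uS₄ − 2q₅t₁)(q₅ + 3u²)² − 24δt₁(uS₄ − t₁(q₅ − 3u²))`; in particular
`6t₁S₃ = S₄²` iff `Q(u) = 0` or `S₄ + 6t₁u = 0`. -/
theorem stmt10 (δ : ℝ) (hδ : δ = 1 ∨ δ = -1) (u t₁ S₄ q₅ : ℝ)
    (h1 : q₅ + 3 * u ^ 2 ≠ 0)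
    (h2 : u * S₄ - t₁ * (q₅ - 3 * u ^ 2) ≠ 0)
    (S₃ : ℝ)
    (hS₃ : S₃ =
      (S₄ + 6 * t₁ * u) ^ 2 * (q₅ + 3 * u ^ 2)
          / (6 * (u * S₄ - t₁ * (q₅ - 3 * u ^ 2)))
        + 4 * δ * (S₄ + 6 * t₁ * u) ^ 2 / (q₅ + 3 * u ^ 2) ^ 2
        - 2 * u * (S₄ + 3 * t₁ * u)) :
    (6 * t₁ * S₃ - S₄ ^ 2) * (u * S₄ - t₁ * (q₅ - 3 * u ^ 2)) * (q₅ + 3 * u ^ 2) ^ 2 =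
      -(S₄ + 6 * t₁ * u) ^ 2 *
        ((u * S₄ - 2 * q₅ * t₁) * (q₅ + 3 * u ^ 2) ^ 2
          - 24 * δ * t₁ * (u * S₄ - t₁ * (q₅ - 3 * u ^ 2))) ∧
    (6 * t₁ * S₃ = S₄ ^ 2 ↔
      (u * S₄ - 2 * q₅ * t₁) * (q₅ + 3 * u ^ 2) ^ 2
          - 24 * δ * t₁ * (u * S₄ - t₁ * (q₅ - 3 * u ^ 2)) = 0 ∨
        S₄ + 6 * t₁ * u = 0) := by
  have key : (6 * t₁ * S₃ - S₄ ^ 2) * (u * S₄ - t₁ * (q₅ - 3 * u ^ 2)) * (q₅ + 3 * u ^ 2) ^ 2 =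
      -(S₄ + 6 * t₁ * u) ^ 2 *
        ((u * S₄ - 2 * q₅ * t₁) * (q₅ + 3 * u ^ 2) ^ 2
          - 24 * δ * t₁ * (u * S₄ - t₁ * (q₅ - 3 * u ^ 2))) := by
    subst hS₃
    have ha : (S₄ + 6 * t₁ * u) ^ 2 * (q₅ + 3 * u ^ 2) / (6 * (u * S₄ - t₁ * (q₅ - 3 * u ^ 2))) * (6 * (u * S₄ - t₁ * (q₅ - 3 * u ^ 2))) = (S₄ + 6 * t₁ * u) ^ 2 * (q₅ + 3 * u ^ 2) :=
      div_mul_cancel₀ _ (mul_ne_zero (by norm_num) h2)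
    have hb : 4 * δ * (S₄ + 6 * t₁ * u) ^ 2 / (q₅ + 3 * u ^ 2) ^ 2 * (q₅ + 3 * u ^ 2) ^ 2 = 4 * δ * (S₄ + 6 * t₁ * u) ^ 2 :=
      div_mul_cancel₀ _ (pow_ne_zero 2 h1)
    linear_combination t₁ * (q₅ + 3 * u ^ 2) ^ 2 * ha + 6 * t₁ * (u * S₄ - t₁ * (q₅ - 3 * u ^ 2)) * hb
  refine ⟨key, ?_⟩
  constructor
  · intro h
    have h0 : -(S₄ + 6 * t₁ * u) ^ 2 *
        ((u * S₄ - 2 * q₅ * t₁) * (q₅ + 3 * u ^ 2) ^ 2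
          - 24 * δ * t₁ * (u * S₄ - t₁ * (q₅ - 3 * u ^ 2))) = 0 := by
      rw [← key, h]; ring
    rcases mul_eq_zero.1 h0 with h' | h'
    · right
      have : (S₄ + 6 * t₁ * u) ^ 2 = 0 := by linarith [neg_eq_zero.1 h']
      exact pow_eq_zero_iff (by norm_num) |>.1 this
    · left; exact h'
  · intro h
    have h0 : (6 * t₁ * S₃ - S₄ ^ 2) * (u * S₄ - t₁ * (q₅ - 3 * u ^ 2)) * (q₅ + 3 * u ^ 2) ^ 2 = 0 := by
      rw [key]
      rcases h with h | h
      · rw [h]; ring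
      · rw [h]; ring
    have hne := mul_ne_zero h2 (pow_ne_zero 2 h1)
    have := (mul_eq_zero.1 (by rw [mul_assoc] at h0; exact h0)).resolve_right hne
    linarith
end
end

section
/- (Lemma samoperesechS4-4, item 2, existence of the tangency point.) Fix δ ∈ {−1, 1}. Let t₁ ≠ 0, S₄ ≠ 0, q₅ ∈ ℝ with S₄² + 12q₅t₁² ≠ 0, and set u₀ = −S₄/(6t₁). Then q₅ + 3u₀² ≠ 0 and u₀S₄ − t₁(q₅ − 3u₀²) ≠ 0, and the formulas (psi-2), namely δt₂ = (S₄ + 6t₁u)(q₅ + 3u²)²/(72(uS₄ − t₁(q₅ − 3u²))) + 2δ(S₄ + 6t₁u)/(3(q₅ + 3u²)) − u(q₅ + u²)/4 and S₃ = (S₄ + 6t₁u)²(q₅ + 3u²)/(6(uS₄ − t₁(q₅ − 3u²))) + 4δ(S₄ + 6t₁u)²/(q₅ + 3u²)² − 2u(S₄ + 3t₁u), evaluated at u = u₀ yield exactly the point t₂ = S₄(S₄² + 36q₅t₁²)/(864δt₁³), S₃ = S₄²/(6t₁) (point (spec1) of the paper); in particular this point satisfies 6t₁S₃ = S₄². 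-/
noncomputable section

/-- Lemma samoperesechS4-4, item 2, existence of the tangency point:
at `u₀ = −S₄/(6t₁)` the denominators of (psi-2) are nonzero and the formulas (psi-2)
yield exactly the point (spec1): `t₂ = S₄(S₄² + 36q₅t₁²)/(864δt₁³)`, `S₃ = S₄²/(6t₁)`,
which lies on the line `6t₁S₃ = S₄²`. -/
theorem stmt11 (δ : ℝ) (hδ : δ = 1 ∨ δ = -1) (t₁ S₄ q₅ : ℝ)
    (ht₁ : t₁ ≠ 0) (hS₄ : S₄ ≠ 0)
    (hq : S₄ ^ 2 + 12 * q₅ * t₁ ^ 2 ≠ 0) :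
    ∀ u₀ : ℝ, u₀ = -S₄ / (6 * t₁) →
      q₅ + 3 * u₀ ^ 2 ≠ 0 ∧
      u₀ * S₄ - t₁ * (q₅ - 3 * u₀ ^ 2) ≠ 0 ∧
      ((S₄ + 6 * t₁ * u₀) * (q₅ + 3 * u₀ ^ 2) ^ 2
            / (72 * (u₀ * S₄ - t₁ * (q₅ - 3 * u₀ ^ 2)))
          + 2 * δ * (S₄ + 6 * t₁ * u₀) / (3 * (q₅ + 3 * u₀ ^ 2))
          - u₀ * (q₅ + u₀ ^ 2) / 4
        = δ * (S₄ * (S₄ ^ 2 + 36 * q₅ * t₁ ^ 2) / (864 * δ * t₁ ^ 3))) ∧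
      ((S₄ + 6 * t₁ * u₀) ^ 2 * (q₅ + 3 * u₀ ^ 2)
            / (6 * (u₀ * S₄ - t₁ * (q₅ - 3 * u₀ ^ 2)))
          + 4 * δ * (S₄ + 6 * t₁ * u₀) ^ 2 / (q₅ + 3 * u₀ ^ 2) ^ 2
          - 2 * u₀ * (S₄ + 3 * t₁ * u₀)
        = S₄ ^ 2 / (6 * t₁)) ∧
      6 * t₁ * (S₄ ^ 2 / (6 * t₁)) = S₄ ^ 2 := by
  have hδ0 : δ ≠ 0 := by rcases hδ with h | h <;> rw [h] <;> norm_num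
  intro u₀ hu₀
  subst hu₀
  have h1 : q₅ + 3 * (-S₄ / (6 * t₁)) ^ 2 ≠ 0 := by
    field_simp
    intro h
    apply hq
    replace h := (div_eq_zero_iff.mp h).resolve_right (by simp [ht₁])
    linarith
  have h2 : -S₄ / (6 * t₁) * S₄ - t₁ * (q₅ - 3 * (-S₄ / (6 * t₁)) ^ 2) ≠ 0 := by
    field_simp
    intro h
    apply hq
    replace h := (div_eq_zero_iff.mp h).resolve_right (by simp [ht₁])
    have h' : (-18 * t₁ ^ 2) * (S₄ ^ 2 + 12 * q₅ * t₁ ^ 2) = 0 := by linear_combination 6 * t₁ ^ 2 * h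
    rcases mul_eq_zero.mp h' with h'' | h''
    · exact absurd h'' (by positivity)
    · exact h''
  have hz : S₄ + 6 * t₁ * (-S₄ / (6 * t₁)) = 0 := by
    field_simp
    ring
  refine ⟨h1, h2, ?_, ?_, ?_⟩
  · rw [hz]
    field_simp
    ring
  · rw [hz]
    field_simp
    ring
  · field_simp
end
end

section
/- (Lemma samoperesechS4, item 3: the self-intersection point of the curve (psi-2) for S₄ = 0.) Fix δ ∈ {−1, 1}. Let t₁ ≠ 0 and q₅ ≠ 0 satisfy q₅(12δt₁ − q₅²)(12δt₁ + q₅²) > 0, and let u ∈ ℝ with u² = q₅(12δt₁ − q₅²)/(3(12δt₁ + q₅²)). Then q₅ + 3u² ≠ 0 and q₅ − 3u² ≠ 0, and the formulas (psi-2) with S₄ = 0, namely δt₂(u) = (6t₁u)(q₅ + 3u²)²/(72(−t₁(q₅ − 3u²))) + 2δ(6t₁u)/(3(q₅ + 3u²)) − u(q₅ + u²)/4 and S₃(u) = (6t₁u)²(q₅ + 3u²)/(6(−t₁(q₅ − 3u²))) + 4δ(6t₁u)²/(q₅ + 3u²)² − 2u·3t₁u, give t₂(u) = 0 and S₃(u)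 = −(q₅² − 12δt₁)²/(12δq₅); in particular the values at u and at −u coincide, so this point is a self-intersection point of the curve (psi-2). -/
noncomputable section

/-- The `t₂`-component of the parametrization (psi-2) with `S₄ = 0`
(determined from `δ·t₂(u) = …`, so `t₂(u) = (…)/δ`). -/
def T2zero (δ t₁ q₅ u : ℝ) : ℝ :=
  ((6 * t₁ * u) * (q₅ + 3 * u ^ 2) ^ 2 / (72 * (-(t₁ * (q₅ - 3 * u ^ 2))))
    + 2 * δ * (6 * t₁ * u) / (3 * (q₅ + 3 * u ^ 2))
    - u * (q₅ + u ^ 2) / 4) / δ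

/-- The `S₃`-component of the parametrization (psi-2) with `S₄ = 0`. -/
def S3zero (δ t₁ q₅ u : ℝ) : ℝ :=
  (6 * t₁ * u) ^ 2 * (q₅ + 3 * u ^ 2) / (6 * (-(t₁ * (q₅ - 3 * u ^ 2))))
    + 4 * δ * (6 * t₁ * u) ^ 2 / (q₅ + 3 * u ^ 2) ^ 2
    - 2 * u * (3 * t₁ * u)

/-- Lemma samoperesechS4, item 3: the self-intersection point of the
curve (psi-2) for `S₄ = 0`: under the stated hypotheses the denominators are
nonzero, `t₂(u) = 0`, `S₃(u) = −(q₅² − 12δt₁)²/(12δq₅)`, and the values at `u` and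
`−u` coincide. -/
theorem stmt17 (δ : ℝ) (hδ : δ = 1 ∨ δ = -1) (t₁ q₅ u : ℝ)
    (ht₁ : t₁ ≠ 0) (hq₅ : q₅ ≠ 0)
    (hpos : q₅ * (12 * δ * t₁ - q₅ ^ 2) * (12 * δ * t₁ + q₅ ^ 2) > 0)
    (hu : u ^ 2 = q₅ * (12 * δ * t₁ - q₅ ^ 2) / (3 * (12 * δ * t₁ + q₅ ^ 2))) :
    q₅ + 3 * u ^ 2 ≠ 0 ∧ q₅ - 3 * u ^ 2 ≠ 0 ∧
    T2zero δ t₁ q₅ u = 0 ∧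
    S3zero δ t₁ q₅ u = -(q₅ ^ 2 - 12 * δ * t₁) ^ 2 / (12 * δ * q₅) ∧
    T2zero δ t₁ q₅ (-u) = T2zero δ t₁ q₅ u ∧
    S3zero δ t₁ q₅ (-u) = S3zero δ t₁ q₅ u := by
  have hδ0 : δ ≠ 0 := by rcases hδ with h | h <;> rw [h] <;> norm_num
  have hδ2 : δ ^ 2 = 1 := by rcases hδ with h | h <;> rw [h] <;> norm_num
  have ha : 12 * δ * t₁ + q₅ ^ 2 ≠ 0 := by
    intro h
    rw [h, mul_zero] at hpos
    exact lt_irrefl 0 hpos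
  have hval1 : q₅ + 3 * u ^ 2 = 2 * q₅ * (12 * δ * t₁) / (12 * δ * t₁ + q₅ ^ 2) := by
    rw [hu]; field_simp; ring
  have hval2 : q₅ - 3 * u ^ 2 = 2 * q₅ ^ 3 / (12 * δ * t₁ + q₅ ^ 2) := by
    rw [hu]; field_simp; ring
  have h1 : q₅ + 3 * u ^ 2 ≠ 0 := by
    rw [hval1]
    exact div_ne_zero (by positivity) ha
  have h2 : q₅ - 3 * u ^ 2 ≠ 0 := by
    rw [hval2]
    exact div_ne_zero (by positivity) ha
  have ht2 : T2zero δ t₁ q₅ u = 0 := by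
    unfold T2zero
    rw [hval1, hval2, hu]
    field_simp
    rcases hδ with h | h <;> subst h <;> ring_nf at ha ⊢ <;> field_simp <;> ring
  have hs3 : S3zero δ t₁ q₅ u = -(q₅ ^ 2 - 12 * δ * t₁) ^ 2 / (12 * δ * q₅) := by
    unfold S3zero
    rw [show (6 * t₁ * u) ^ 2 = 36 * t₁ ^ 2 * u ^ 2 by ring,
      show 2 * u * (3 * t₁ * u) = 6 * t₁ * u ^ 2 by ring, hval1, hval2, hu]
    field_simp
    rcases hδ with h | h <;> subst h <;> ring_nf at ha ⊢ <;> field_simp <;> ring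
  have hoddT : T2zero δ t₁ q₅ (-u) = -T2zero δ t₁ q₅ u := by
    unfold T2zero; ring
  have hevenS : S3zero δ t₁ q₅ (-u) = S3zero δ t₁ q₅ u := by
    unfold S3zero; ring
  exact ⟨h1, h2, ht2, hs3, by rw [hoddT, ht2, neg_zero], hevenS⟩
end
end
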